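/- arXiv:2012.13861 — 5 statements merged into one kernel-verified Lean document; each statement's English description precedes it below -/
import Mathlib

section
/- The gradient of F(X) = tr(X Log X - X) on the manifold of Hermitian positive-definite matrices, with respect to the Frobenius inner product on Hermitian matrices, is ∇F(X) = Log X. -/
open Matrix
open scoped ComplexOrder

/-- The principal matrix logarithm of a Hermitian (positive-definite) matrix, defined via the
spectral decomposition; junk value `0` on non-Hermitian matrices. -/
noncomputable def matLog {N : ℕ} (X : Matrix (Fin N) (Fin N) ℂ) : Matrix (Fin N) (Fin N) ℂ :=
  if hX : X.IsHermitian then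
    (hX.eigenvectorUnitary : Matrix (Fin N) (Fin N) ℂ) *
      Matrix.diagonal (fun i => (Real.log (hX.eigenvalues i) : ℂ)) *
      star (hX.eigenvectorUnitary : Matrix (Fin N) (Fin N) ℂ)
  else 0

/-!
With the relative entropy `D(A ‖ B) = Re tr(A Log A - A Log B - A + B)` one has
`F(X + tY) = F(X) + t Re tr(Log X · Y) + D(X + tY ‖ X)`, so it suffices that the remainder
is `O(t²)`. In eigenbases `(uᵢ)`, `(vⱼ)` of `A`, `B` with eigenvalues `aᵢ`, `bⱼ`,
`D(A ‖ B) = ∑ᵢⱼ |⟨uᵢ, vⱼ⟩|² (aᵢ log aᵢ - aᵢ log bⱼ - aᵢ + bⱼ)`, and the scalar bounds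
`0 ≤ a log a - a log b - a + b ≤ (a - b)² / b` (both from `log x ≤ x - 1`) give Klein's
inequality `0 ≤ D(A ‖ B) ≤ Re tr((A - B)² B⁻¹)`. For `A = X + tY`, `B = X` the right-hand side
is `t² Re tr(Y² X⁻¹)`, and `X + tY` stays positive definite for small `t`.
-/

open Filter Topology

namespace Matrix.IsHermitian

variable {n 𝕜 : Type*} [RCLike 𝕜] [Fintype n] [DecidableEq n] {A B : Matrix n n 𝕜}

lemma cfc_mul (hA : A.IsHermitian) (f g : ℝ → ℝ) : hA.cfc f * hA.cfc g = hA.cfc (f * g) := by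
  simp only [IsHermitian.cfc, ← map_mul, diagonal_mul_diagonal]
  congr with i
  simp

lemma cfc_one (hA : A.IsHermitian) : hA.cfc 1 = 1 := by
  simp only [IsHermitian.cfc]
  rw [← map_one (Unitary.conjStarAlgAut 𝕜 (Matrix n n 𝕜) hA.eigenvectorUnitary),
    ← diagonal_one]
  congr with i
  simp

lemma cfc_id (hA : A.IsHermitian) : hA.cfc id = A := hA.spectral_theorem.symm

lemma posSemidef_cfc (hA : A.IsHermitian) {f : ℝ → ℝ} (hf : ∀ i, 0 ≤ f (hA.eigenvalues i)) :
    (hA.cfc f).PosSemidef := by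
  rw [IsHermitian.cfc, Unitary.conjStarAlgAut_apply]
  exact (PosSemidef.diagonal fun i => by simpa using hf i).mul_mul_conjTranspose_same _

lemma posDef_cfc (hA : A.IsHermitian) {f : ℝ → ℝ} (hf : ∀ i, 0 < f (hA.eigenvalues i)) :
    (hA.cfc f).PosDef := by
  rw [IsHermitian.cfc, Unitary.conjStarAlgAut_apply]
  exact (PosDef.diagonal fun i => by simpa using hf i).mul_mul_conjTranspose_same
    (vecMul_injective_iff_isUnit.mpr Unitary.isUnit_coe)

/-- `|⟨uᵢ, vⱼ⟩|²` for the eigenbases `(uᵢ)` of `A` and `(vⱼ)` of `B`. -/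
noncomputable def overlap (hA : A.IsHermitian) (hB : B.IsHermitian) (i j : n) : ℝ :=
  ‖(star (hA.eigenvectorUnitary : Matrix n n 𝕜) *
    (hB.eigenvectorUnitary : Matrix n n 𝕜)) i j‖ ^ 2

lemma re_trace_cfc_mul_cfc (hA : A.IsHermitian) (hB : B.IsHermitian) (f g : ℝ → ℝ) :
    RCLike.re (hA.cfc f * hB.cfc g).trace =
      ∑ i, ∑ j, overlap hA hB i j * (f (hA.eigenvalues i) * g (hB.eigenvalues j)) := by
  set W := star (hA.eigenvectorUnitary : Matrix n n 𝕜) *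
    (hB.eigenvectorUnitary : Matrix n n 𝕜)
  have hcycle : (hA.cfc f * hB.cfc g).trace =
      (diagonal (RCLike.ofReal ∘ f ∘ hA.eigenvalues) * W *
        diagonal (RCLike.ofReal ∘ g ∘ hB.eigenvalues) * Wᴴ).trace := by
    simp only [W, IsHermitian.cfc, Unitary.conjStarAlgAut_apply, conjTranspose_mul,
      star_eq_conjTranspose, conjTranspose_conjTranspose, Matrix.mul_assoc]
    rw [← trace_mul_comm]
    simp only [Matrix.mul_assoc]
  have hW : diagonal (RCLike.ofReal ∘ f ∘ hA.eigenvalues) * W *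
      diagonal (RCLike.ofReal ∘ g ∘ hB.eigenvalues) =
      of fun i j => (f (hA.eigenvalues i) : 𝕜) * W i j * g (hB.eigenvalues j) := by
    ext i j
    simp [diagonal_mul, mul_diagonal]
  rw [hcycle, hW]
  change _ = ∑ i, ∑ j, ‖W i j‖ ^ 2 * _
  simp only [trace, diag, mul_apply, of_apply, conjTranspose_apply, map_sum]
  refine Finset.sum_congr rfl fun i _ => Finset.sum_congr rfl fun j _ => ?_
  rw [mul_right_comm _ (W i j), mul_assoc, RCLike.star_def, RCLike.mul_conj]
  norm_cast
  ring

lemma re_trace_relEntropy_eq_sum (hA : A.IsHermitian) (hB : B.IsHermitian) :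
    RCLike.re (A * hA.cfc Real.log - A * hB.cfc Real.log - A + B).trace =
      ∑ i, ∑ j, overlap hA hB i j *
        (hA.eigenvalues i * Real.log (hA.eigenvalues i) -
          hA.eigenvalues i * Real.log (hB.eigenvalues j) - hA.eigenvalues i +
            hB.eigenvalues j) := by
  have h : A * hA.cfc Real.log - A * hB.cfc Real.log - A + B =
      hA.cfc (id * Real.log) * hB.cfc 1 - hA.cfc id * hB.cfc Real.log - hA.cfc id * hB.cfc 1 +
        hA.cfc 1 * hB.cfc id := by
    rw [← hA.cfc_mul, hA.cfc_id, hB.cfc_id, hA.cfc_one, hB.cfc_one, mul_one, mul_one, one_mul]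
  simp only [h, trace_add, trace_sub, map_add, map_sub, re_trace_cfc_mul_cfc,
    ← Finset.sum_sub_distrib, ← Finset.sum_add_distrib]
  refine Finset.sum_congr rfl fun i _ => Finset.sum_congr rfl fun j _ => ?_
  simp only [Pi.mul_apply, Pi.one_apply, id]
  ring

lemma re_trace_sub_mul_sub_mul_cfc (hA : A.IsHermitian) (hB : B.IsHermitian) (g : ℝ → ℝ) :
    RCLike.re ((A - B) * (A - B) * hB.cfc g).trace =
      ∑ i, ∑ j, overlap hA hB i j *
        ((hA.eigenvalues i - hB.eigenvalues j) ^ 2 * g (hB.eigenvalues j)) := by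
  have h : ((A - B) * (A - B) * hB.cfc g).trace =
      (hA.cfc (id * id) * hB.cfc g).trace - (hA.cfc id * hB.cfc (id * g)).trace -
        (hA.cfc id * hB.cfc (g * id)).trace + (hA.cfc 1 * hB.cfc (id * id * g)).trace := by
    simp only [← hA.cfc_mul, ← hB.cfc_mul, hA.cfc_id, hB.cfc_id, hA.cfc_one, one_mul,
      sub_mul, mul_sub, trace_sub, Matrix.mul_assoc, trace_mul_cycle' A (hB.cfc g) B]
    abel
  simp only [h, map_add, map_sub, re_trace_cfc_mul_cfc,
    ← Finset.sum_sub_distrib, ← Finset.sum_add_distrib]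
  refine Finset.sum_congr rfl fun i _ => Finset.sum_congr rfl fun j _ => ?_
  simp only [Pi.mul_apply, Pi.one_apply, id]
  ring

end Matrix.IsHermitian

theorem Matrix.PosDef.eventually_posDef_add_smul {n 𝕜 : Type*} [RCLike 𝕜] [Fintype n]
    [DecidableEq n] {X Y : Matrix n n 𝕜} (hX : X.PosDef) (hY : Y.IsHermitian) :
    ∀ᶠ t : ℝ in 𝓝 0, (X + t • Y).PosDef := by
  have hsmall : ∀ᶠ r in 𝓝[>] (0 : ℝ), 0 < r ∧ ∀ i, r ≤ hX.1.eigenvalues i := by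
    filter_upwards [self_mem_nhdsWithin, nhdsWithin_le_nhds
      (eventually_all.2 fun i => eventually_le_nhds (hX.eigenvalues_pos i))] with r h0 h
    exact ⟨h0, h⟩
  obtain ⟨r, hr, hrX⟩ := hsmall.exists
  have hpos : ∀ j, ∀ᶠ t : ℝ in 𝓝 0, 0 < r + t * hY.eigenvalues j := fun j =>
    (continuous_const.add (continuous_id.mul continuous_const)).continuousAt.eventually
      (lt_mem_nhds (by simpa using hr))
  filter_upwards [eventually_all.2 hpos] with t ht
  have hsplit : X + t • Y = hX.1.cfc (fun x => x - r) + hY.cfc (fun y => r + t * y) := by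
    rw [← hX.1.cfc_eq, ← hY.cfc_eq, cfc_sub (R := ℝ) (fun x => x) (fun _ => r),
      cfc_id' ℝ X hX.1.isSelfAdjoint, cfc_const r X hX.1.isSelfAdjoint,
      cfc_const_add r (t * ·) Y, cfc_const_mul_id t Y hY.isSelfAdjoint]
    abel
  rw [hsplit]
  exact .posSemidef_add (hX.1.posSemidef_cfc fun i => sub_nonneg.2 (hrX i)) (hY.posDef_cfc ht)

theorem Real.mul_log_sub_mul_log_sub_add_nonneg {a b : ℝ} (ha : 0 < a) (hb : 0 < b) :
    0 ≤ a * Real.log a - a * Real.log b - a + b := by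
  have h := mul_le_mul_of_nonneg_left (Real.log_le_sub_one_of_pos (div_pos hb ha)) ha.le
  rw [Real.log_div hb.ne' ha.ne', mul_sub, mul_sub, mul_div_cancel₀ _ ha.ne'] at h
  linarith

theorem Real.mul_log_sub_mul_log_sub_add_le {a b : ℝ} (ha : 0 < a) (hb : 0 < b) :
    a * Real.log a - a * Real.log b - a + b ≤ (a - b) ^ 2 / b := by
  have h := mul_le_mul_of_nonneg_left (Real.log_le_sub_one_of_pos (div_pos ha hb)) ha.le
  rw [Real.log_div ha.ne' hb.ne'] at h
  have hsq : (a - b) ^ 2 / b = a * (a / b - 1) - a + b := by field_simp; ring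
  linarith

theorem hasDerivAt_zero_of_norm_le_sq {𝕜 E : Type*} [NontriviallyNormedField 𝕜]
    [NormedAddCommGroup E] [NormedSpace 𝕜 E] {f : 𝕜 → E} {C : ℝ}
    (h : ∀ᶠ t in 𝓝 0, ‖f t‖ ≤ C * ‖t‖ ^ 2) : HasDerivAt f 0 0 := by
  have h0 : f 0 = 0 := norm_le_zero_iff.1 (by simpa using h.self_of_nhds)
  refine .of_isLittleO ?_
  simp only [h0, sub_zero, smul_zero]
  exact (Asymptotics.IsBigO.of_bound C (h.mono fun t ht => by simpa [norm_pow] using ht))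
    |>.trans_isLittleO (Asymptotics.isLittleO_pow_id one_lt_two)

lemma matLog_eq_cfc {N : ℕ} {M : Matrix (Fin N) (Fin N) ℂ} (hM : M.IsHermitian) :
    matLog M = hM.cfc Real.log := by
  rw [matLog, dif_pos hM, IsHermitian.cfc, Unitary.conjStarAlgAut_apply]
  rfl

noncomputable def relEntropy {N : ℕ} (A B : Matrix (Fin N) (Fin N) ℂ) : ℝ :=
  (A * matLog A - A * matLog B - A + B).trace.re

section relEntropy

variable {N : ℕ} {A B : Matrix (Fin N) (Fin N) ℂ}

theorem relEntropy_nonneg (hA : A.PosDef) (hB : B.PosDef) : 0 ≤ relEntropy A B := by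
  rw [relEntropy, matLog_eq_cfc hA.1, matLog_eq_cfc hB.1, ← RCLike.re_to_complex,
    hA.1.re_trace_relEntropy_eq_sum hB.1]
  refine Finset.sum_nonneg fun i _ => Finset.sum_nonneg fun j _ => mul_nonneg (sq_nonneg _) ?_
  exact Real.mul_log_sub_mul_log_sub_add_nonneg (hA.eigenvalues_pos i) (hB.eigenvalues_pos j)

theorem relEntropy_le (hA : A.PosDef) (hB : B.PosDef) :
    relEntropy A B ≤ ((A - B) * (A - B) * hB.1.cfc (·⁻¹)).trace.re := by
  rw [relEntropy, matLog_eq_cfc hA.1, matLog_eq_cfc hB.1, ← RCLike.re_to_complex,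
    ← RCLike.re_to_complex, hA.1.re_trace_relEntropy_eq_sum hB.1,
    hA.1.re_trace_sub_mul_sub_mul_cfc hB.1]
  gcongr with i _ j _
  · exact sq_nonneg _
  · rw [← div_eq_mul_inv]
    exact Real.mul_log_sub_mul_log_sub_add_le (hA.eigenvalues_pos i) (hB.eigenvalues_pos j)

lemma re_trace_mul_matLog_sub_eq (A B : Matrix (Fin N) (Fin N) ℂ) :
    (A * matLog A - A).trace.re =
      (B * matLog B - B).trace.re + (matLog B * (A - B)).trace.re + relEntropy A B := by
  simp only [relEntropy, mul_sub, trace_sub, trace_add, Complex.sub_re, Complex.add_re,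
    trace_mul_comm (matLog B)]
  ring

theorem hasDerivAt_relEntropy_add_smul (hA : A.PosDef) (hB : B.IsHermitian) :
    HasDerivAt (fun t : ℝ => relEntropy (A + t • B) A) 0 0 := by
  refine hasDerivAt_zero_of_norm_le_sq (C := (B * B * hA.1.cfc (·⁻¹)).trace.re) ?_
  filter_upwards [hA.eventually_posDef_add_smul hB] with t ht
  have hle := relEntropy_le ht hA
  simp only [add_sub_cancel_left, smul_mul_assoc, mul_smul_comm, smul_smul, trace_smul,
    Complex.smul_re, smul_eq_mul] at hle
  rw [Real.norm_eq_abs, abs_of_nonneg (relEntropy_nonneg ht hA), Real.norm_eq_abs, sq_abs]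
  linarith

end relEntropy

/-- The gradient of `F(X) = tr(X Log X - X)` on Hermitian positive-definite matrices, with
respect to the inner product `⟨A,B⟩ = Re tr(AB)` on Hermitian matrices, is `∇F(X) = Log X`:
for every Hermitian direction `Y`, the directional derivative of `F` at `X` equals
`⟨Log X, Y⟩ = Re tr(Log X * Y)`. -/
theorem gradient_vonNeumann_entropy {N : ℕ} (X : Matrix (Fin N) (Fin N) ℂ) (hX : X.PosDef)
    (Y : Matrix (Fin N) (Fin N) ℂ) (hY : Y.IsHermitian) :
    HasDerivAt
      (fun ε : ℝ => (Matrix.trace ((X + ε • Y) * matLog (X + ε • Y) - (X + ε • Y))).re)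
      ((Matrix.trace (matLog X * Y)).re) 0 := by
  have hexpand : (fun t : ℝ => ((X + t • Y) * matLog (X + t • Y) - (X + t • Y)).trace.re) =
      fun t => (X * matLog X - X).trace.re + t * (matLog X * Y).trace.re +
        relEntropy (X + t • Y) X := by
    funext t
    rw [re_trace_mul_matLog_sub_eq _ X, add_sub_cancel_left, mul_smul_comm, trace_smul,
      Complex.smul_re, smul_eq_mul]
  rw [hexpand]
  have := (((hasDerivAt_id' 0).mul_const (matLog X * Y).trace.re).const_add
    (X * matLog X - X).trace.re).add (hasDerivAt_relEntropy_add_smul hX hY)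
  rwa [one_mul, add_zero] at this
end

section
/- For Hermitian positive-definite matrices X and Y, the von Neumann divergence B(X,Y) = tr(X(Log X - Log Y) - X + Y) is nonnegative, with equality if and only if X = Y. -/
open Matrix
open scoped ComplexOrder

private lemma klein_scalar {a b : ℝ} (ha : 0 < a) (hb : 0 < b) :
    0 ≤ a * Real.log a - a * Real.log b - a + b ∧
      (a * Real.log a - a * Real.log b - a + b = 0 ↔ a = b) := by
  have key : a * Real.log a - a * Real.log b - a + b
      = a * ((b / a - 1) - Real.log (b / a)) := by
    rw [Real.log_div hb.ne' ha.ne']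
    field_simp
    ring
  have h1 : Real.log (b / a) ≤ b / a - 1 := Real.log_le_sub_one_of_pos (div_pos hb ha)
  constructor
  · rw [key]; exact mul_nonneg ha.le (by linarith)
  · rw [key]
    constructor
    · intro h
      have h2 : (b / a - 1) - Real.log (b / a) = 0 := by
        rcases mul_eq_zero.mp h with h' | h'
        · exact absurd h' ha.ne'
        · exact h'
      by_contra hne
      have hba : b / a ≠ 1 := by
        intro h3
        apply hne
        field_simp at h3
        linarith
      have := Real.log_lt_sub_one_of_pos (div_pos hb ha) hba
      linarith
    · intro h
      subst h
      simp [div_self ha.ne']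

private lemma trace_conj_sandwich {N : ℕ} (U M : Matrix (Fin N) (Fin N) ℂ)
    (hU : star U * U = 1) :
    Matrix.trace (U * M * star U) = Matrix.trace M := by
  rw [Matrix.trace_mul_cycle, hU, one_mul]

/-- For Hermitian positive-definite `X`, `Y`, the von Neumann divergence
`B(X,Y) = tr(X(Log X - Log Y) - X + Y)` (a real number) is nonnegative, and vanishes iff
`X = Y`. -/
theorem vonNeumann_divergence_nonneg {N : ℕ} (X Y : Matrix (Fin N) (Fin N) ℂ)
    (hX : X.PosDef) (hY : Y.PosDef) :
    0 ≤ (Matrix.trace (X * (matLog X - matLog Y) - X + Y)).re ∧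
    ((Matrix.trace (X * (matLog X - matLog Y) - X + Y)).re = 0 ↔ X = Y) := by
  classical
  set a : Fin N → ℝ := hX.1.eigenvalues with ha_def
  set b : Fin N → ℝ := hY.1.eigenvalues with hb_def
  have hapos : ∀ i, 0 < a i := fun i => hX.eigenvalues_pos i
  have hbpos : ∀ j, 0 < b j := fun j => hY.eigenvalues_pos j
  set U : Matrix (Fin N) (Fin N) ℂ := (hX.1.eigenvectorUnitary : Matrix (Fin N) (Fin N) ℂ)
    with hU_def
  set V : Matrix (Fin N) (Fin N) ℂ := (hY.1.eigenvectorUnitary : Matrix (Fin N) (Fin N) ℂ)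
    with hV_def
  have hU1 : star U * U = 1 := mem_unitaryGroup_iff'.mp hX.1.eigenvectorUnitary.2
  have hU2 : U * star U = 1 := mem_unitaryGroup_iff.mp hX.1.eigenvectorUnitary.2
  have hV1 : star V * V = 1 := mem_unitaryGroup_iff'.mp hY.1.eigenvectorUnitary.2
  have hV2 : V * star V = 1 := mem_unitaryGroup_iff.mp hY.1.eigenvectorUnitary.2
  set Da : Matrix (Fin N) (Fin N) ℂ := Matrix.diagonal (RCLike.ofReal ∘ a) with hDa
  set Db : Matrix (Fin N) (Fin N) ℂ := Matrix.diagonal (RCLike.ofReal ∘ b) with hDb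
  set Lx : Matrix (Fin N) (Fin N) ℂ := Matrix.diagonal (fun i => (Real.log (a i) : ℂ)) with hLx
  set Ly : Matrix (Fin N) (Fin N) ℂ := Matrix.diagonal (fun j => (Real.log (b j) : ℂ)) with hLy
  have hXeq : X = U * Da * star U := hX.1.spectral_theorem
  have hYeq : Y = V * Db * star V := hY.1.spectral_theorem
  have hLX : matLog X = U * Lx * star U := by
    rw [matLog, dif_pos hX.1]
  have hLY : matLog Y = V * Ly * star V := by
    rw [matLog, dif_pos hY.1]
  set W : Matrix (Fin N) (Fin N) ℂ := star U * V with hW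
  have hsW : star W = star V * U := by rw [hW, Matrix.star_mul, star_star]
  have hWW : W * star W = 1 := by
    rw [hW, hsW, mul_assoc, ← mul_assoc V, hV2, one_mul, hU1]
  have hWW' : star W * W = 1 := by
    rw [hW, hsW, mul_assoc, ← mul_assoc U, hU2, one_mul, hV1]
  set p : Fin N → Fin N → ℝ := fun i j => Complex.normSq (W i j) with hp
  have hpnn : ∀ i j, 0 ≤ p i j := fun i j => Complex.normSq_nonneg _
  have hterm : ∀ i j, W i j * star (W i j) = ((p i j : ℝ) : ℂ) := by
    intro i j
    rw [hp]
    simp [Complex.mul_conj]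
  have hrowC : ∀ i, ∑ j, ((p i j : ℝ) : ℂ) = 1 := by
    intro i
    have h := congrFun (congrFun hWW i) i
    rw [Matrix.mul_apply] at h
    simp only [Matrix.one_apply_eq] at h
    rw [← h]
    refine Finset.sum_congr rfl fun j _ => ?_
    rw [Matrix.star_apply]
    exact (hterm i j).symm
  have hcolC : ∀ j, ∑ i, ((p i j : ℝ) : ℂ) = 1 := by
    intro j
    have h := congrFun (congrFun hWW' j) j
    rw [Matrix.mul_apply] at h
    simp only [Matrix.one_apply_eq] at h
    rw [← h]
    refine Finset.sum_congr rfl fun i _ => ?_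
    rw [Matrix.star_apply, mul_comm]
    exact (hterm i j).symm
  -- trace computations
  have h1 : Matrix.trace (X * matLog X) = ∑ i, ((a i : ℝ) : ℂ) * Real.log (a i) := by
    rw [hLX]
    nth_rewrite 1 [hXeq]
    have e : (U * Da * star U) * (U * Lx * star U) = U * (Da * Lx) * star U := by
      calc (U * Da * star U) * (U * Lx * star U)
          = U * (Da * ((star U * U) * (Lx * star U))) := by simp only [mul_assoc]
        _ = U * (Da * Lx) * star U := by rw [hU1, one_mul]; simp only [mul_assoc]
    rw [e, trace_conj_sandwich U _ hU1, hDa, hLx, Matrix.diagonal_mul_diagonal,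
      Matrix.trace_diagonal]
    rfl
  have hWLW : ∀ i, (W * Ly * star W) i i = ∑ j, ((p i j : ℝ) : ℂ) * Real.log (b j) := by
    intro i
    rw [Matrix.mul_apply]
    refine Finset.sum_congr rfl fun j _ => ?_
    rw [hLy, Matrix.mul_diagonal, Matrix.star_apply]
    rw [mul_comm (W i j) _, mul_assoc, hterm i j]
    ring
  have h2 : Matrix.trace (X * matLog Y)
      = ∑ i, ∑ j, ((p i j : ℝ) : ℂ) * (((a i : ℝ) : ℂ) * Real.log (b j)) := by
    rw [hLY]
    nth_rewrite 1 [hXeq]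
    have e : (U * Da * star U) * (V * Ly * star V) = U * (Da * (W * Ly * star W)) * star U := by
      rw [hW, hsW]
      calc (U * Da * star U) * (V * Ly * star V)
          = U * (Da * (star U * (V * (Ly * (star V * (U * star U)))))) := by
            rw [hU2, mul_one]; simp only [mul_assoc]
        _ = U * (Da * (star U * V * Ly * (star V * U))) * star U := by simp only [mul_assoc]
    rw [e, trace_conj_sandwich U _ hU1, Matrix.trace]
    refine Finset.sum_congr rfl fun i _ => ?_
    rw [Matrix.diag_apply, hDa, Matrix.diagonal_mul, hWLW i, Finset.mul_sum]
    refine Finset.sum_congr rfl fun j _ => ?_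
    show (a i : ℂ) * (((p i j : ℝ) : ℂ) * Real.log (b j)) = _
    ring
  have h3 : Matrix.trace X = ∑ i, ((a i : ℝ) : ℂ) := by
    nth_rewrite 1 [hXeq]
    rw [trace_conj_sandwich U _ hU1, hDa, Matrix.trace_diagonal]
    rfl
  have h4 : Matrix.trace Y = ∑ j, ((b j : ℝ) : ℂ) := by
    nth_rewrite 1 [hYeq]
    rw [trace_conj_sandwich V _ hV1, hDb, Matrix.trace_diagonal]
    rfl
  set g : Fin N → Fin N → ℝ :=
    fun i j => a i * Real.log (a i) - a i * Real.log (b j) - a i + b j with hg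
  have hmain : Matrix.trace (X * (matLog X - matLog Y) - X + Y)
      = ((∑ i, ∑ j, p i j * g i j : ℝ) : ℂ) := by
    have hsplit : Matrix.trace (X * (matLog X - matLog Y) - X + Y)
        = Matrix.trace (X * matLog X) - Matrix.trace (X * matLog Y)
          - Matrix.trace X + Matrix.trace Y := by
      rw [Matrix.trace_add, Matrix.trace_sub, Matrix.mul_sub, Matrix.trace_sub]
    rw [hsplit, h1, h2, h3, h4]
    have h1' : (∑ i, ((a i : ℝ) : ℂ) * Real.log (a i))
        = ∑ i, ∑ j, ((p i j : ℝ) : ℂ) * (((a i : ℝ) : ℂ) * Real.log (a i)) := by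
      refine Finset.sum_congr rfl fun i _ => ?_
      rw [← Finset.sum_mul, hrowC i, one_mul]
    have h3' : (∑ i, ((a i : ℝ) : ℂ))
        = ∑ i, ∑ j, ((p i j : ℝ) : ℂ) * ((a i : ℝ) : ℂ) := by
      refine Finset.sum_congr rfl fun i _ => ?_
      rw [← Finset.sum_mul, hrowC i, one_mul]
    have h4' : (∑ j, ((b j : ℝ) : ℂ))
        = ∑ i, ∑ j, ((p i j : ℝ) : ℂ) * ((b j : ℝ) : ℂ) := by
      rw [Finset.sum_comm (s := Finset.univ) (t := Finset.univ)
        (f := fun i j => ((p i j : ℝ) : ℂ) * ((b j : ℝ) : ℂ))]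
      refine Finset.sum_congr rfl fun j _ => ?_
      rw [← Finset.sum_mul, hcolC j, one_mul]
    rw [h1', h3', h4']
    push_cast
    rw [← Finset.sum_sub_distrib, ← Finset.sum_sub_distrib, ← Finset.sum_add_distrib]
    refine Finset.sum_congr rfl fun i _ => ?_
    rw [← Finset.sum_sub_distrib, ← Finset.sum_sub_distrib, ← Finset.sum_add_distrib]
    refine Finset.sum_congr rfl fun j _ => ?_
    rw [hg]
    push_cast
    ring
  have hre : (Matrix.trace (X * (matLog X - matLog Y) - X + Y)).re
      = ∑ i, ∑ j, p i j * g i j := by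
    rw [hmain, Complex.ofReal_re]
  have hqnn : ∀ i j, 0 ≤ p i j * g i j :=
    fun i j => mul_nonneg (hpnn i j) (klein_scalar (hapos i) (hbpos j)).1
  constructor
  · rw [hre]
    exact Finset.sum_nonneg fun i _ => Finset.sum_nonneg fun j _ => hqnn i j
  · constructor
    · intro h0
      rw [hre] at h0
      have hz : ∀ i ∈ Finset.univ, ∀ j ∈ Finset.univ, p i j * g i j = 0 := by
        intro i _ j hj
        have := (Finset.sum_eq_zero_iff_of_nonneg
          (fun i _ => Finset.sum_nonneg fun j _ => hqnn i j)).mp h0 i (Finset.mem_univ i)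
        exact (Finset.sum_eq_zero_iff_of_nonneg (fun j _ => hqnn i j)).mp this j hj
      have hWij : ∀ i j, W i j = 0 ∨ a i = b j := by
        intro i j
        rcases mul_eq_zero.mp (hz i (Finset.mem_univ i) j (Finset.mem_univ j)) with h | h
        · left
          exact Complex.normSq_eq_zero.mp h
        · right
          exact (klein_scalar (hapos i) (hbpos j)).2.mp h
      have hDW : Da * W = W * Db := by
        ext i j
        rw [hDa, hDb, Matrix.diagonal_mul, Matrix.mul_diagonal]
        rcases hWij i j with h | h
        · simp [h]
        · show ((a i : ℝ) : ℂ) * W i j = W i j * ((b j : ℝ) : ℂ)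
          rw [h, mul_comm]
      have hWV : W * star V = star U := by
        rw [hW, mul_assoc, hV2, mul_one]
      have hUW : U * W = V := by
        rw [hW, ← mul_assoc, hU2, one_mul]
      calc X = U * Da * star U := hXeq
        _ = U * Da * (W * star V) := by rw [hWV]
        _ = U * (Da * W) * star V := by simp only [mul_assoc]
        _ = U * (W * Db) * star V := by rw [hDW]
        _ = (U * W) * Db * star V := by simp only [mul_assoc]
        _ = V * Db * star V := by rw [hUW]
        _ = Y := hYeq.symm
    · intro h
      subst h
      simp
end

section
/- For F(X) = (1/2)‖X‖², the unique minimizer of X ↦ ∑ᵢ δ_F(X, Xᵢ) over Hermitian matrices is the total-square-loss mean X̄_TSL = (∑ᵢ Xᵢ/√(1+‖Xᵢ‖²)) / (∑ⱼ 1/√(1+‖Xⱼ‖²)), a convex combination of X₁,…,X_m; in particular X̄_TSL is Hermitian positive-definite when all Xᵢ are. -/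
/-! With weights `wᵢ = 1/√(1+‖Xᵢ‖²)` the loss is `½ ∑ wᵢ‖Y - Xᵢ‖²`. Since the Frobenius norm comes
from an inner product, the cross terms cancel at the weighted mean `X̄` and
`∑ wᵢ‖Y - Xᵢ‖² = (∑ wᵢ)‖Y - X̄‖² + ∑ wᵢ‖X̄ - Xᵢ‖²`, so `X̄` is the strict minimizer. It is positive
definite as a positive combination of positive definite matrices. -/

open scoped ComplexOrder

attribute [local instance] Matrix.frobeniusNormedAddCommGroup Matrix.frobeniusNormedSpace

section CenterMass

variable {ι E : Type*} [NormedAddCommGroup E] [InnerProductSpace ℝ E]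
  {s : Finset ι} {w : ι → ℝ} {x : ι → E}

theorem Finset.sum_smul_centerMass_sub (hw : ∑ i ∈ s, w i ≠ 0) :
    ∑ i ∈ s, w i • (s.centerMass w x - x i) = 0 := by
  rw [Finset.sum_congr rfl fun i _ => smul_sub (w i) _ _, Finset.sum_sub_distrib,
    ← Finset.sum_smul, Finset.centerMass, smul_smul, mul_inv_cancel₀ hw, one_smul, sub_self]

theorem Finset.sum_mul_norm_sub_sq_eq (hw : ∑ i ∈ s, w i ≠ 0) (y : E) :
    ∑ i ∈ s, w i * ‖y - x i‖ ^ 2 =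
      (∑ i ∈ s, w i) * ‖y - s.centerMass w x‖ ^ 2 +
        ∑ i ∈ s, w i * ‖s.centerMass w x - x i‖ ^ 2 := by
  set c := s.centerMass w x
  have hcross : ∑ i ∈ s, w i * inner ℝ (y - c) (c - x i) = 0 := by
    simp_rw [← real_inner_smul_right]
    rw [← inner_sum, Finset.sum_smul_centerMass_sub hw, inner_zero_right]
  calc ∑ i ∈ s, w i * ‖y - x i‖ ^ 2
      = ∑ i ∈ s, (w i * ‖y - c‖ ^ 2 + 2 * (w i * inner ℝ (y - c) (c - x i))
          + w i * ‖c - x i‖ ^ 2) := by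
        refine Finset.sum_congr rfl fun i _ => ?_
        rw [← sub_add_sub_cancel y c (x i), norm_add_sq_real]
        ring
    _ = _ := by
        rw [Finset.sum_add_distrib, Finset.sum_add_distrib, ← Finset.mul_sum, hcross,
          Finset.sum_mul]
        ring

theorem Finset.sum_mul_norm_centerMass_sub_sq_lt (hs : s.Nonempty) (hw : ∀ i ∈ s, 0 < w i)
    {y : E} (hy : y ≠ s.centerMass w x) :
    ∑ i ∈ s, w i * ‖s.centerMass w x - x i‖ ^ 2 < ∑ i ∈ s, w i * ‖y - x i‖ ^ 2 := by
  have hW : 0 < ∑ i ∈ s, w i := Finset.sum_pos hw hs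
  rw [Finset.sum_mul_norm_sub_sq_eq hW.ne' y]
  have : 0 < ‖y - s.centerMass w x‖ := norm_pos_iff.mpr (sub_ne_zero.mpr hy)
  nlinarith [mul_pos hW (pow_pos this 2)]

end CenterMass

theorem Matrix.PosDef.centerMass {𝕜 n ι : Type*} [RCLike 𝕜] [Fintype n] {s : Finset ι}
    (hs : s.Nonempty) {w : ι → ℝ} (hw : ∀ i ∈ s, 0 < w i) {A : ι → Matrix n n 𝕜}
    (hA : ∀ i ∈ s, (A i).PosDef) : (s.centerMass w A).PosDef :=
  (Matrix.posDef_sum hs fun i hi => (hA i hi).smul (hw i hi)).smul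
    (inv_pos.mpr (Finset.sum_pos hw hs))

/-- The Frobenius norm is the norm of the nested `PiLp 2`, hence satisfies the parallelogram law. -/
noncomputable abbrev Matrix.frobeniusInnerProductSpace {𝕜 α m n : Type*} [RCLike 𝕜]
    [NormedAddCommGroup α] [InnerProductSpace 𝕜 α] [Fintype m] [Fintype n] :
    InnerProductSpace 𝕜 (Matrix m n α) :=
  .ofNorm 𝕜 fun A B => parallelogram_law_with_norm_mul 𝕜
    (WithLp.toLp 2 fun i => WithLp.toLp 2 (A i)) (WithLp.toLp 2 fun i => WithLp.toLp 2 (B i))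

/-- For `F(X) = ½‖X‖²`, the unique minimizer over Hermitian matrices of
`X ↦ ∑ᵢ δ_F(X, Xᵢ)` with `δ_F(X,Y) = ½‖X-Y‖²/√(1+‖Y‖²)` is the total-square-loss mean
`X̄_TSL = (∑ᵢ Xᵢ/√(1+‖Xᵢ‖²)) / (∑ⱼ 1/√(1+‖Xⱼ‖²))`; being a convex combination of the
`Xᵢ`, it is Hermitian positive-definite when all `Xᵢ` are. -/
theorem tsl_mean {N m : ℕ} (hm : 0 < m)
    (Xs : Fin m → Matrix (Fin N) (Fin N) ℂ) (hXs : ∀ i, (Xs i).PosDef) :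
    ((∑ j, (Real.sqrt (1 + ‖Xs j‖ ^ 2))⁻¹)⁻¹ •
        ∑ i, (Real.sqrt (1 + ‖Xs i‖ ^ 2))⁻¹ • Xs i).PosDef ∧
    ∀ Y : Matrix (Fin N) (Fin N) ℂ, Y.IsHermitian →
      Y ≠ (∑ j, (Real.sqrt (1 + ‖Xs j‖ ^ 2))⁻¹)⁻¹ •
            ∑ i, (Real.sqrt (1 + ‖Xs i‖ ^ 2))⁻¹ • Xs i →
      (∑ i, (1 / 2 : ℝ) * ‖((∑ j, (Real.sqrt (1 + ‖Xs j‖ ^ 2))⁻¹)⁻¹ •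
              ∑ k, (Real.sqrt (1 + ‖Xs k‖ ^ 2))⁻¹ • Xs k) - Xs i‖ ^ 2 /
            Real.sqrt (1 + ‖Xs i‖ ^ 2))
        < ∑ i, (1 / 2 : ℝ) * ‖Y - Xs i‖ ^ 2 / Real.sqrt (1 + ‖Xs i‖ ^ 2) := by
  let _ : InnerProductSpace ℝ (Matrix (Fin N) (Fin N) ℂ) := Matrix.frobeniusInnerProductSpace
  set w : Fin m → ℝ := fun i => (Real.sqrt (1 + ‖Xs i‖ ^ 2))⁻¹
  have hw : ∀ i ∈ Finset.univ, 0 < w i := fun i _ => by positivity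
  have hs : (Finset.univ : Finset (Fin m)).Nonempty := Finset.univ_nonempty_iff.mpr ⟨⟨0, hm⟩⟩
  have hloss (Z : Matrix (Fin N) (Fin N) ℂ) :
      ∑ i, (1 / 2 : ℝ) * ‖Z - Xs i‖ ^ 2 / Real.sqrt (1 + ‖Xs i‖ ^ 2) =
        (1 / 2 : ℝ) * ∑ i, w i * ‖Z - Xs i‖ ^ 2 := by
    rw [Finset.mul_sum]
    exact Finset.sum_congr rfl fun i _ => by simp only [w]; ring
  refine ⟨Matrix.PosDef.centerMass hs hw fun i _ => hXs i, fun Y _ hY => ?_⟩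
  rw [hloss, hloss]
  exact mul_lt_mul_of_pos_left
    (Finset.sum_mul_norm_centerMass_sub_sq_lt (x := Xs) hs hw hY) one_half_pos
end

section
/- For F(X) = -log det X with gradient ∇F(X) = -X^{-1}, any stationary point X̄ of X ↦ ∑ᵢ δ_F(X, Xᵢ) on the HPD manifold satisfies X̄^{-1} = (∑ᵢ Xᵢ^{-1}/√(1+‖Xᵢ^{-1}‖²)) / (∑ⱼ 1/√(1+‖Xⱼ^{-1}‖²)); the right-hand side is a Hermitian positive-definite matrix, so X̄ = ((∑ⱼ 1/√(1+‖Xⱼ^{-1}‖²))^{-1} ∑ᵢ Xᵢ^{-1}/√(1+‖Xᵢ^{-1}‖²))^{-1} is well defined and HPD. -/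
open Matrix
open scoped ComplexOrder

attribute [local instance] Matrix.frobeniusNormedAddCommGroup Matrix.frobeniusNormedSpace

/-!
Perturbing `X̄` in a Hermitian direction `Y`, the derivative of `δ_F(X̄ + εY, Xᵢ)` at `ε = 0` is
`wᵢ · Re tr((Xᵢ⁻¹ - X̄⁻¹) Y)` with `wᵢ = 1/√(1+‖Xᵢ⁻¹‖²)`, because `d/dε log det (X̄ + εY) = tr(X̄⁻¹Y)`.
Stationarity therefore says `Re tr(A Y) = 0` for all Hermitian `Y`, where
`A = ∑ᵢ wᵢ (Xᵢ⁻¹ - X̄⁻¹)` is Hermitian; taking `Y = A` gives `tr(Aᴴ A) = 0`, so `A = 0`, which is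
the weighted-mean formula for `X̄⁻¹`.
-/

open Polynomial in
theorem Matrix.hasDerivAt_det_add_smul {𝕜 n : Type*} [NontriviallyNormedField 𝕜] [Fintype n]
    [DecidableEq n] {A : Matrix n n 𝕜} (hA : IsUnit A.det) (B : Matrix n n 𝕜) :
    HasDerivAt (fun z : 𝕜 => (A + z • B).det) (A.det * trace (A⁻¹ * B)) 0 := by
  set p : 𝕜[X] := det (1 + (X : 𝕜[X]) • (A⁻¹ * B).map C)
  have hp : ∀ z : 𝕜, (A + z • B).det = A.det * p.eval z := by
    intro z
    rw [show A + z • B = A * (1 + z • (A⁻¹ * B)) by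
      rw [mul_add, mul_one, Matrix.mul_smul, mul_nonsing_inv_cancel_left _ _ hA], det_mul]
    simp only [p]
    rw [← coe_evalRingHom, RingHom.map_det]
    congr 2
    ext i j
    by_cases hij : i = j <;> simp [hij, mul_apply, eval_finsetSum]
  have hderiv := (p.hasDerivAt 0).const_mul A.det
  rw [derivative_det_one_add_X_smul] at hderiv
  simpa only [hp] using hderiv

theorem Matrix.PosDef.hasDerivAt_log_re_det_mul_inv_add_smul {n : Type*} [Fintype n]
    [DecidableEq n] {X Z : Matrix n n ℂ} (hX : X.PosDef) (hZ : Z.PosDef) (Y : Matrix n n ℂ) :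
    HasDerivAt (fun ε : ℝ => Real.log ((Z * (X + ε • Y)⁻¹).det.re))
      (-(trace (X⁻¹ * Y)).re) 0 := by
  -- `det Z / det X` is a positive real, so taking real parts commutes with multiplying by it.
  have hpos : 0 < Z.det / X.det := div_pos hZ.det_pos hX.det_pos
  obtain ⟨c, hc, hcZX⟩ : ∃ c : ℝ, 0 < c ∧ (c : ℂ) = Z.det / X.det :=
    ⟨_, (Complex.pos_iff.mp hpos).1, (Complex.eq_re_of_ofReal_le hpos.le).symm⟩
  have hX0 : X.det ≠ 0 := hX.det_pos.ne'
  set g : ℂ → ℂ := fun z => Z.det * (X + z • Y).det⁻¹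
  have hg : HasDerivAt g (-(c * trace (X⁻¹ * Y))) 0 := by
    have := ((hasDerivAt_det_add_smul hX0.isUnit Y).inv (by simpa using hX0)).const_mul Z.det
    refine this.congr_deriv ?_
    rw [zero_smul, add_zero, hcZX]
    field_simp
  have hdet : ∀ ε : ℝ, (Z * (X + ε • Y)⁻¹).det = g ε := by
    intro ε
    rw [det_mul, det_nonsing_inv, Ring.inverse_eq_inv', ← Complex.coe_smul]
  have hg0 : (g 0).re = c := by
    rw [show g 0 = c by rw [hcZX]; simp [g, div_eq_mul_inv], Complex.ofReal_re]
  have hlog := hg.real_of_complex.log (by rw [Complex.ofReal_zero, hg0]; exact hc.ne')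
  simp only [Complex.ofReal_zero, hg0, ← hdet] at hlog
  convert hlog using 1
  rw [Complex.neg_re, Complex.re_ofReal_mul]
  field_simp

theorem Matrix.hasDerivAt_re_trace_mul_add_smul {n : Type*} [Fintype n] (W X Y : Matrix n n ℂ) :
    HasDerivAt (fun ε : ℝ => (trace (W * (X + ε • Y))).re) (trace (W * Y)).re 0 := by
  have h : (fun ε : ℝ => (trace (W * (X + ε • Y))).re)
      = fun ε : ℝ => (trace (W * X)).re + ε * (trace (W * Y)).re := by
    funext ε
    simp [mul_add, trace_add, trace_smul]
  rw [h]
  simpa using ((hasDerivAt_id (0 : ℝ)).mul_const (trace (W * Y)).re).const_add (trace (W * X)).re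

/-- The total log-determinant divergence `δ_F(X, Y)` for `F = -log det`. -/
noncomputable def totalLogDetDiv {N : ℕ} (X Y : Matrix (Fin N) (Fin N) ℂ) : ℝ :=
  (Real.log ((Y * X⁻¹).det.re) + (trace (Y⁻¹ * X)).re - N) / Real.sqrt (1 + ‖Y⁻¹‖ ^ 2)

theorem hasDerivAt_totalLogDetDiv_add_smul {N : ℕ} {X Z : Matrix (Fin N) (Fin N) ℂ}
    (hX : X.PosDef) (hZ : Z.PosDef) (Y : Matrix (Fin N) (Fin N) ℂ) :
    HasDerivAt (fun ε : ℝ => totalLogDetDiv (X + ε • Y) Z)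
      ((Real.sqrt (1 + ‖Z⁻¹‖ ^ 2))⁻¹ * (trace ((Z⁻¹ - X⁻¹) * Y)).re) 0 := by
  have h := (((hX.hasDerivAt_log_re_det_mul_inv_add_smul hZ Y).add
    (hasDerivAt_re_trace_mul_add_smul Z⁻¹ X Y)).sub_const (N : ℝ)).div_const
    (Real.sqrt (1 + ‖Z⁻¹‖ ^ 2))
  refine h.congr_deriv ?_
  rw [sub_mul, trace_sub, Complex.sub_re]
  ring

theorem Matrix.IsHermitian.eq_zero_of_re_trace_mul_self_eq_zero {n : Type*} [Fintype n]
    {A : Matrix n n ℂ} (hA : A.IsHermitian) (h : (trace (A * A)).re = 0) : A = 0 := by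
  have hnonneg := (posSemidef_conjTranspose_mul_self A).trace_nonneg
  rw [hA.eq] at hnonneg
  refine trace_conjTranspose_mul_self_eq_zero_iff.mp ?_
  rw [hA.eq]
  exact Complex.ext h (Complex.nonneg_iff.mp hnonneg).2.symm

theorem eq_inv_sum_smul_sum_smul_of_sum_smul_sub_eq_zero {ι K M : Type*} [Field K]
    [AddCommGroup M] [Module K M] {s : Finset ι} {w : ι → K} {x : ι → M} {y : M}
    (hw : ∑ i ∈ s, w i ≠ 0) (h : ∑ i ∈ s, w i • (x i - y) = 0) :
    y = (∑ i ∈ s, w i)⁻¹ • ∑ i ∈ s, w i • x i := by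
  simp only [smul_sub, Finset.sum_sub_distrib, ← Finset.sum_smul, sub_eq_zero] at h
  rw [h, smul_smul, inv_mul_cancel₀ hw, one_smul]

/-- For `F(X) = -log det X` (gradient `∇F(X) = -X⁻¹`), any stationary point `X̄` on the HPD
manifold of `X ↦ ∑ᵢ δ_F(X, Xᵢ)`, where
`δ_F(X,Y) = (log det(Y X⁻¹) + tr(Y⁻¹X) - N)/√(1+‖Y⁻¹‖²)` is the total log-determinant
divergence, satisfies `X̄⁻¹ = (∑ᵢ Xᵢ⁻¹/√(1+‖Xᵢ⁻¹‖²)) / (∑ⱼ 1/√(1+‖Xⱼ⁻¹‖²))`; the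
right-hand side is Hermitian positive-definite, so `X̄` equals its inverse and is
well defined and HPD. -/
theorem tld_mean_stationary {N m : ℕ} (hm : 0 < m)
    (Xs : Fin m → Matrix (Fin N) (Fin N) ℂ) (hXs : ∀ i, (Xs i).PosDef)
    (Xbar : Matrix (Fin N) (Fin N) ℂ) (hXbar : Xbar.PosDef)
    (hstat : ∀ Y : Matrix (Fin N) (Fin N) ℂ, Y.IsHermitian →
      HasDerivAt
        (fun ε : ℝ => ∑ i,
          (Real.log ((Xs i * (Xbar + ε • Y)⁻¹).det.re) +
              (Matrix.trace ((Xs i)⁻¹ * (Xbar + ε • Y))).re - N) /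
            Real.sqrt (1 + ‖(Xs i)⁻¹‖ ^ 2))
        0 0) :
    Xbar⁻¹ = (∑ j, (Real.sqrt (1 + ‖(Xs j)⁻¹‖ ^ 2))⁻¹)⁻¹ •
        ∑ i, (Real.sqrt (1 + ‖(Xs i)⁻¹‖ ^ 2))⁻¹ • (Xs i)⁻¹ ∧
    ((∑ j, (Real.sqrt (1 + ‖(Xs j)⁻¹‖ ^ 2))⁻¹)⁻¹ •
        ∑ i, (Real.sqrt (1 + ‖(Xs i)⁻¹‖ ^ 2))⁻¹ • (Xs i)⁻¹).PosDef ∧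
    Xbar = ((∑ j, (Real.sqrt (1 + ‖(Xs j)⁻¹‖ ^ 2))⁻¹)⁻¹ •
        ∑ i, (Real.sqrt (1 + ‖(Xs i)⁻¹‖ ^ 2))⁻¹ • (Xs i)⁻¹)⁻¹ := by
  set w : Fin m → ℝ := fun i => (Real.sqrt (1 + ‖(Xs i)⁻¹‖ ^ 2))⁻¹
  set A := ∑ i, w i • ((Xs i)⁻¹ - Xbar⁻¹)
  have hA : A.IsHermitian := isSelfAdjoint_sum _ fun i _ =>
    ((hXs i).isHermitian.inv.sub hXbar.isHermitian.inv).smul (IsSelfAdjoint.all (w i))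
  have hdir : ∀ Y, HasDerivAt (fun ε : ℝ => ∑ i, totalLogDetDiv (Xbar + ε • Y) (Xs i))
      (trace (A * Y)).re 0 := fun Y => by
    refine (HasDerivAt.fun_sum fun i _ =>
      hasDerivAt_totalLogDetDiv_add_smul hXbar (hXs i) Y).congr_deriv ?_
    simp only [A, Finset.sum_mul, Matrix.smul_mul, trace_sum, trace_smul, Complex.re_sum,
      Complex.smul_re, smul_eq_mul, w]
  have hA0 : A = 0 := hA.eq_zero_of_re_trace_mul_self_eq_zero ((hdir A).unique (hstat A hA))
  have hw : 0 < ∑ j, w j :=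
    Finset.sum_pos (fun i _ => by positivity) (Finset.univ_nonempty_iff.mpr ⟨⟨0, hm⟩⟩)
  have hmean : Xbar⁻¹ = (∑ j, w j)⁻¹ • ∑ i, w i • (Xs i)⁻¹ :=
    eq_inv_sum_smul_sum_smul_of_sum_smul_sub_eq_zero hw.ne' hA0
  refine ⟨hmean, hmean ▸ hXbar.inv, ?_⟩
  rw [← hmean, nonsing_inv_nonsing_inv _ hXbar.det_pos.ne'.isUnit]
end

section
/- For N×N Hermitian positive-definite X and Hermitian H, the derivative of ε ↦ Log(X + εH) at ε = 0 equals ∫₀¹ [(X - I)s + I]^{-1} H [(X - I)s + I]^{-1} ds. -/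
open Matrix
open scoped ComplexOrder

attribute [local instance] Matrix.frobeniusNormedAddCommGroup Matrix.frobeniusNormedSpace

/-!
For `x > 0`, `log x = ∫₀¹ (x - 1) / (s (x - 1) + 1) ds`, the integrand being the `s`-derivative
of `log (s (x - 1) + 1)`; through the functional calculus this becomes
`Log A = ∫₀¹ (A - 1) (s (A - 1) + 1)⁻¹ ds` for positive definite `A`. Since `X + εH` stays
positive definite for small `ε`, `Log (X + εH)` is given by this integral near `ε = 0`, and we
differentiate under the integral sign, the `ε`-derivative of the integrand being jointly continuous
on a compact neighbourhood. With `M = s (X + εH - 1) + 1`, that derivative is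
`H M⁻¹ - (X + εH - 1) M⁻¹ s H M⁻¹ = M⁻¹ H M⁻¹`, because `1 - s (X + εH - 1) M⁻¹ = M⁻¹`.
-/

open Set Filter Topology MeasureTheory Metric Function
open scoped Interval Ring

section ParametricIntegral

variable {E : Type*} [NormedAddCommGroup E] [NormedSpace ℝ E]

theorem hasDerivAt_intervalIntegral_of_continuousOn {F F' : ℝ → ℝ → E} {x₀ a b r : ℝ}
    (hr : 0 < r) (hF : ContinuousOn (uncurry F) (closedBall x₀ r ×ˢ uIcc a b))
    (hF' : ContinuousOn (uncurry F') (closedBall x₀ r ×ˢ uIcc a b))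
    (hderiv : ∀ x ∈ ball x₀ r, ∀ t ∈ uIcc a b, HasDerivAt (F · t) (F' x t) x) :
    HasDerivAt (fun x => ∫ t in a..b, F x t) (∫ t in a..b, F' x₀ t) x₀ := by
  obtain ⟨C, hC⟩ :=
    ((isCompact_closedBall x₀ r).prod isCompact_uIcc).exists_bound_of_continuousOn hF'
  have hslice : ∀ {G : ℝ → ℝ → E}, ContinuousOn (uncurry G) (closedBall x₀ r ×ˢ uIcc a b) →
      ∀ x ∈ closedBall x₀ r, ContinuousOn (G x) (uIcc a b) :=
    fun hG x hx => hG.comp (Continuous.prodMk_right x).continuousOn fun _ ht => ⟨hx, ht⟩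
  have hx₀ : x₀ ∈ closedBall x₀ r := mem_closedBall_self hr.le
  refine (intervalIntegral.hasDerivAt_integral_of_dominated_loc_of_deriv_le (bound := fun _ => C)
    (ball_mem_nhds x₀ hr) ?_ (hslice hF x₀ hx₀).intervalIntegrable
    (((hslice hF' x₀ hx₀).mono uIoc_subset_uIcc).aestronglyMeasurable measurableSet_uIoc) ?_
    intervalIntegrable_const ?_).2
  · filter_upwards [ball_mem_nhds x₀ hr] with x hx
    exact ((hslice hF x (ball_subset_closedBall hx)).mono uIoc_subset_uIcc).aestronglyMeasurable
      measurableSet_uIoc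
  · exact .of_forall fun t ht x hx => hC (x, t) ⟨ball_subset_closedBall hx, uIoc_subset_uIcc ht⟩
  · exact .of_forall fun t ht x hx => hderiv x hx t (uIoc_subset_uIcc ht)

end ParametricIntegral

section RingInverse

variable {𝕜 R : Type*} [NontriviallyNormedField 𝕜] [NormedRing R] [NormedAlgebra 𝕜 R]
  [HasSummableGeomSeries R]

theorem HasDerivAt.ringInverse {f : 𝕜 → R} {f' : R} {x : 𝕜} (hf : HasDerivAt f f' x)
    (hx : IsUnit (f x)) : HasDerivAt (fun y => (f y)⁻¹ʳ) (-((f x)⁻¹ʳ * f' * (f x)⁻¹ʳ)) x := by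
  have hinv := hasFDerivAt_ringInverse (𝕜 := 𝕜) hx.unit
  rw [hx.unit_spec] at hinv
  simpa [Function.comp_def, ← Ring.inverse_unit, hx.unit_spec] using hinv.comp_hasDerivAt x hf

theorem HasDerivAt.mul_ringInverse_smul_add_one {f : 𝕜 → R} {f' : R} {x s : 𝕜}
    (hf : HasDerivAt f f' x) (hx : IsUnit (s • f x + 1)) :
    HasDerivAt (fun y => f y * (s • f y + 1)⁻¹ʳ)
      ((s • f x + 1)⁻¹ʳ * f' * (s • f x + 1)⁻¹ʳ) x := by
  have hM : HasDerivAt (fun y => s • f y + 1) (s • f') x := (hf.const_smul s).add_const 1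
  refine (hf.mul (hM.ringInverse hx)).congr_deriv ?_
  set M := s • f x + 1
  have key : s • f x * M⁻¹ʳ = 1 - M⁻¹ʳ := by
    rw [show s • f x = M - 1 by simp [M], sub_mul, Ring.mul_inverse_cancel _ hx, one_mul]
  have hswap : f x * -(M⁻¹ʳ * s • f' * M⁻¹ʳ) = -(s • f x * M⁻¹ʳ * f' * M⁻¹ʳ) := by
    simp only [mul_neg, mul_smul_comm, smul_mul_assoc, mul_assoc]
  rw [hswap, key]
  noncomm_ring

end RingInverse

theorem ContinuousOn.matrix_inv {X n K : Type*} [TopologicalSpace X] [Fintype n] [DecidableEq n]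
    [NormedField K] {M : X → Matrix n n K} {S : Set X} (hM : ContinuousOn M S)
    (hu : ∀ x ∈ S, IsUnit (M x)) : ContinuousOn (fun x => (M x)⁻¹) S := fun x hx => by
  have hdet : (M x).det ≠ 0 := ((isUnit_iff_isUnit_det _).mp (hu x hx)).ne_zero
  refine (continuousAt_matrix_inv _ ?_).comp_continuousWithinAt (hM x hx)
  rw [Ring.inverse_eq_inv']
  exact continuousAt_inv₀ hdet

section PosDef

variable {n 𝕜 : Type*} [Fintype n] [RCLike 𝕜]

theorem Matrix.re_star_smul_dotProduct_mulVec_smul (M : Matrix n n 𝕜) (t : ℝ) (x : n → 𝕜) :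
    RCLike.re (star (t • x) ⬝ᵥ M *ᵥ (t • x)) = t ^ 2 * RCLike.re (star x ⬝ᵥ M *ᵥ x) := by
  rw [star_smul, star_trivial, mulVec_smul, smul_dotProduct, dotProduct_smul, smul_smul,
    RCLike.smul_re, sq]

theorem Matrix.PosDef.eventually_add_smul {A B : Matrix n n 𝕜} (hA : A.PosDef)
    (hB : B.IsHermitian) : ∀ᶠ ε in 𝓝 (0 : ℝ), (A + ε • B).PosDef := by
  set q : ℝ → (n → 𝕜) → ℝ := fun ε x => RCLike.re (star x ⬝ᵥ (A + ε • B) *ᵥ x)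
  have hq : Continuous fun p : ℝ × (n → 𝕜) => q p.1 p.2 := by
    simp only [q, dotProduct, mulVec]
    fun_prop
  have hsphere : ∀ᶠ ε in 𝓝 (0 : ℝ), ∀ u ∈ sphere (0 : n → 𝕜) 1, 0 < q ε u :=
    (isCompact_sphere 0 1).eventually_forall_of_forall_eventually fun u hu =>
      continuousAt_const.eventually_lt hq.continuousAt <| by
        simpa [q] using hA.re_dotProduct_pos (ne_of_mem_sphere hu one_ne_zero)
  filter_upwards [hsphere] with ε hε
  have hherm : (A + ε • B).IsHermitian := hA.1.add (hB.smul (IsSelfAdjoint.all ε))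
  refine posDef_iff_dotProduct_mulVec.mpr ⟨hherm, fun x hx => RCLike.pos_iff.mpr
    ⟨?_, hherm.im_star_dotProduct_mulVec_self x⟩⟩
  have hxpos : 0 < ‖x‖ := norm_pos_iff.mpr hx
  have hu := hε (‖x‖⁻¹ • x) (by simp [norm_smul, hxpos.ne'])
  rw [show q ε _ = _ from Matrix.re_star_smul_dotProduct_mulVec_smul ..] at hu
  exact pos_of_mul_pos_right hu (by positivity)

end PosDef

theorem matLog_eq_cfc_s19 {N : ℕ} {A : Matrix (Fin N) (Fin N) ℂ} (hA : A.IsHermitian) :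
    matLog A = cfc Real.log A := by
  rw [hA.cfc_eq, IsHermitian.cfc, matLog, dif_pos hA]
  rfl

section LogIntegral

attribute [local instance] Matrix.frobeniusNormedRing Matrix.frobeniusNormedAlgebra

variable {n 𝕜 : Type*} [Fintype n] [DecidableEq n] [RCLike 𝕜] {A : Matrix n n 𝕜}

theorem Matrix.IsHermitian.hasDerivAt_cfc (hA : A.IsHermitian) {f : ℝ → ℝ → ℝ} {f' : ℝ → ℝ}
    {s : ℝ} (hf : ∀ x ∈ spectrum ℝ A, HasDerivAt (f · x) (f' x) s) :
    HasDerivAt (fun t => cfc (f t) A) (cfc f' A) s := by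
  have hv : HasDerivAt (fun t => ((↑) ∘ f t ∘ hA.eigenvalues : n → 𝕜))
      ((↑) ∘ f' ∘ hA.eigenvalues) s :=
    hasDerivAt_pi.2 fun i => by
      simpa [Function.comp_def] using (RCLike.ofRealCLM (K := 𝕜)).hasFDerivAt.comp_hasDerivAt s
        (hf _ (hA.eigenvalues_mem_spectrum_real i))
  have hD := (diagonalLinearMap n ℝ 𝕜).toContinuousLinearMap.hasFDerivAt.comp_hasDerivAt s hv
  simp only [hA.cfc_eq, IsHermitian.cfc, Unitary.conjStarAlgAut_apply]
  exact (hD.const_mul _).mul_const _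

theorem Matrix.IsHermitian.cfc_mul_sub_one_add_one (hA : A.IsHermitian) (s : ℝ) :
    cfc (fun x => s * (x - 1) + 1) A = s • (A - 1) + 1 := by
  have := hA.isSelfAdjoint
  rw [cfc_add_const 1 (fun x => s * (x - 1)) A, cfc_const_mul s (fun x => x - 1) A,
    cfc_sub (fun x => x) (fun _ => 1) A, cfc_id' ℝ A, cfc_const_one ℝ A, map_one]

open scoped MatrixOrder in
theorem Matrix.PosDef.mul_sub_one_add_one_pos (hA : A.PosDef) {s : ℝ} (hs : s ∈ Icc 0 1)
    {x : ℝ} (hx : x ∈ spectrum ℝ A) : 0 < s * (x - 1) + 1 := by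
  have hx := hA.isStrictlyPositive.spectrum_pos hx
  rcases hs.2.lt_or_eq with hs1 | rfl
  · nlinarith [mul_nonneg hs.1 hx.le]
  · linarith

theorem Matrix.PosDef.isUnit_smul_sub_one_add_one (hA : A.PosDef) {s : ℝ} (hs : s ∈ Icc 0 1) :
    IsUnit (s • (A - 1) + 1) := by
  rw [← hA.1.cfc_mul_sub_one_add_one s, isUnit_cfc_iff _ A (ha := hA.1.isSelfAdjoint)]
  exact fun x hx => (hA.mul_sub_one_add_one_pos hs hx).ne'

theorem Matrix.PosDef.cfc_div_mul_sub_one_add_one (hA : A.PosDef) {s : ℝ} (hs : s ∈ Icc 0 1) :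
    cfc (fun x => (x - 1) / (s * (x - 1) + 1)) A = (A - 1) * (s • (A - 1) + 1)⁻¹ := by
  have hcont : ∀ f : ℝ → ℝ, ContinuousOn f (spectrum ℝ A) := A.finite_real_spectrum.continuousOn
  have hne : ∀ x ∈ spectrum ℝ A, s * (x - 1) + 1 ≠ 0 :=
    fun x hx => (hA.mul_sub_one_add_one_pos hs hx).ne'
  have := hA.1.isSelfAdjoint
  simp only [div_eq_mul_inv]
  rw [cfc_mul (fun x => x - 1) _ A (hcont _) (hcont _),
    cfc_inv (fun x => s * (x - 1) + 1) A hne (hcont _), hA.1.cfc_mul_sub_one_add_one,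
    cfc_sub (fun x => x) (fun _ => 1) A, cfc_id' ℝ A, cfc_const_one ℝ A,
    nonsing_inv_eq_ringInverse]

theorem Matrix.PosDef.cfc_log_eq_integral (hA : A.PosDef) :
    cfc Real.log A = ∫ s in (0 : ℝ)..1, (A - 1) * (s • (A - 1) + 1)⁻¹ := by
  have hI : uIcc (0 : ℝ) 1 = Icc 0 1 := uIcc_of_le zero_le_one
  have hderiv : ∀ s ∈ uIcc (0 : ℝ) 1,
      HasDerivAt (fun t => cfc (fun x => Real.log (t * (x - 1) + 1)) A)
        ((A - 1) * (s • (A - 1) + 1)⁻¹) s := by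
    intro s hs
    rw [hI] at hs
    rw [← hA.cfc_div_mul_sub_one_add_one hs]
    refine hA.1.hasDerivAt_cfc fun x hx => ?_
    simpa using (((hasDerivAt_id s).mul_const (x - 1)).add_const 1).log
      (hA.mul_sub_one_add_one_pos hs hx).ne'
  have hcont : ContinuousOn (fun s : ℝ => (A - 1) * (s • (A - 1) + 1)⁻¹) (uIcc 0 1) := by
    refine continuousOn_const.mul (ContinuousOn.matrix_inv (by fun_prop) ?_)
    rw [hI]
    exact fun s hs => hA.isUnit_smul_sub_one_add_one hs
  rw [intervalIntegral.integral_eq_sub_of_hasDerivAt hderiv hcont.intervalIntegrable]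
  simp

theorem Matrix.PosDef.hasDerivAt_integral_sub_one_mul_inv {X H : Matrix n n 𝕜} (hX : X.PosDef)
    (hH : H.IsHermitian) :
    HasDerivAt (fun ε : ℝ => ∫ s in (0 : ℝ)..1, (X + ε • H - 1) * (s • (X + ε • H - 1) + 1)⁻¹)
      (∫ s in (0 : ℝ)..1, (s • (X - 1) + 1)⁻¹ * H * (s • (X - 1) + 1)⁻¹) 0 := by
  obtain ⟨r, hr, hpos⟩ := nhds_basis_closedBall.eventually_iff.1 (hX.eventually_add_smul hH)
  have hunit : ∀ p ∈ closedBall (0 : ℝ) r ×ˢ uIcc (0 : ℝ) 1,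
      IsUnit (p.2 • (X + p.1 • H - 1) + 1) := fun p hp =>
    (hpos hp.1).isUnit_smul_sub_one_add_one (by simpa [uIcc_of_le zero_le_one] using hp.2)
  have hinv : ContinuousOn (fun p : ℝ × ℝ => (p.2 • (X + p.1 • H - 1) + 1)⁻¹)
      (closedBall (0 : ℝ) r ×ˢ uIcc (0 : ℝ) 1) :=
    ContinuousOn.matrix_inv (by fun_prop) hunit
  have hderiv : ∀ ε ∈ ball (0 : ℝ) r, ∀ s ∈ uIcc (0 : ℝ) 1,
      HasDerivAt (fun ε => (X + ε • H - 1) * (s • (X + ε • H - 1) + 1)⁻¹)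
        ((s • (X + ε • H - 1) + 1)⁻¹ * H * (s • (X + ε • H - 1) + 1)⁻¹) ε := by
    intro ε hε s hs
    have hpath : HasDerivAt (fun ε : ℝ => X + ε • H - 1) H ε :=
      ((((hasDerivAt_id' ε).smul_const H).const_add X).sub_const 1).congr_deriv (one_smul ℝ H)
    simp only [nonsing_inv_eq_ringInverse]
    exact hpath.mul_ringInverse_smul_add_one (hunit (ε, s) ⟨ball_subset_closedBall hε, hs⟩)
  have key := hasDerivAt_intervalIntegral_of_continuousOn
    (F := fun ε s => (X + ε • H - 1) * (s • (X + ε • H - 1) + 1)⁻¹)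
    (F' := fun ε s => (s • (X + ε • H - 1) + 1)⁻¹ * H * (s • (X + ε • H - 1) + 1)⁻¹) hr
    (ContinuousOn.mul (by fun_prop) hinv) ((hinv.mul continuousOn_const).mul hinv) hderiv
  rwa [zero_smul, add_zero] at key

end LogIntegral

/-- For `N×N` Hermitian positive-definite `X` and Hermitian `H`, the derivative of
`ε ↦ Log(X + εH)` at `ε = 0` equals the Bochner integral
`∫₀¹ [(X - I)s + I]⁻¹ H [(X - I)s + I]⁻¹ ds`. -/
theorem deriv_matLog {N : ℕ} (X H : Matrix (Fin N) (Fin N) ℂ)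
    (hX : X.PosDef) (hH : H.IsHermitian) :
    HasDerivAt (fun ε : ℝ => matLog (X + ε • H))
      (∫ s in (0 : ℝ)..1, ((s • (X - 1) + 1)⁻¹ * H * (s • (X - 1) + 1)⁻¹)) 0 := by
  refine (hX.hasDerivAt_integral_sub_one_mul_inv hH).congr_of_eventuallyEq ?_
  filter_upwards [hX.eventually_add_smul hH] with ε hε
  rw [matLog_eq_cfc_s19 hε.1, hε.cfc_log_eq_integral]
end
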